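/- arXiv:1911.11171 — 5 statements merged into one kernel-verified Lean document; each statement's English description precedes it below -/
import Mathlib

section
/- Let D be an odd positive integer and let (M,b) be a linear constraint system over ℤ_D with n variables. Then (M,b) admits a quantum solution on (ℂ^D)^{⊗n} in which every operator A_i is an n-quDit generalized Pauli operator if and only if (M,b) has a classical solution. -/
noncomputable section

/-- ω = exp(2πi/D). -/
noncomputable def rootOfUnity (D : ℕ) : ℂ := Complex.exp (2 * Real.pi * Complex.I / D)

/-- The boost operator `Z = Σ_j ω^j |j⟩⟨j|` on `ℂ^D`, as a matrix indexed by `ZMod D`. -/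
noncomputable def ZMat (D : ℕ) : Matrix (ZMod D) (ZMod D) ℂ :=
  Matrix.of fun i j => if i = j then rootOfUnity D ^ (ZMod.val j) else 0

/-- The shift operator `X = Σ_j |j+1⟩⟨j|` on `ℂ^D`, as a matrix indexed by `ZMod D`. -/
def XMat (D : ℕ) : Matrix (ZMod D) (ZMod D) ℂ :=
  Matrix.of fun i j => if i = j + 1 then 1 else 0

/-- The parity operator `Π_D = Σ_j |-j⟩⟨j|` on `ℂ^D`. -/
def parityMat (D : ℕ) : Matrix (ZMod D) (ZMod D) ℂ :=
  Matrix.of fun i j => if i = -j then 1 else 0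

/-- A single-quDit generalized Pauli operator: any matrix of the form `ω^k Z^p X^q` with
`k, p, q ∈ ℤ_D`. -/
def IsPauli1 (D : ℕ) [NeZero D] (σ : Matrix (ZMod D) (ZMod D) ℂ) : Prop :=
  ∃ k p q : ZMod D, σ = rootOfUnity D ^ k.val • (ZMat D ^ p.val * XMat D ^ q.val)

/-- The tensor product `σ₁ ⊗ ⋯ ⊗ σₙ` of `n` one-quDit matrices, as a matrix on
`(ℂ^D)^{⊗n}` indexed by `Fin n → ZMod D`. -/
noncomputable def tensorFun {D n : ℕ} (σs : Fin n → Matrix (ZMod D) (ZMod D) ℂ) :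
    Matrix (Fin n → ZMod D) (Fin n → ZMod D) ℂ :=
  Matrix.of fun f g => ∏ k, σs k (f k) (g k)

/-- An `n`-quDit generalized Pauli operator: a tensor product of `n` single-quDit
generalized Pauli operators. -/
def IsPauliN (D n : ℕ) [NeZero D]
    (σ : Matrix (Fin n → ZMod D) (Fin n → ZMod D) ℂ) : Prop :=
  ∃ σs : Fin n → Matrix (ZMod D) (ZMod D) ℂ, (∀ k, IsPauli1 D (σs k)) ∧ σ = tensorFun σs

end

/-!
Label the Pauli operator `ω^k Z^p X^q` on `(ℂ^D)^{⊗N}` by `(k, p, q)`; the labels form a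
Heisenberg group, `X^q Z^{p'} = ω^{-p'·q} Z^{p'} X^q` giving its multiplication, and the
labelling is faithful. The quantity `2k + p·q` (twice the phase of the operator relative to its
symmetric Weyl form) is additive on commuting pairs, so applying it to a row relation
`∏_j A_j^{M_ij} = ω^{b_i}`, whose factors pairwise commute, yields `M y = 2b` with
`y_j = 2k_j + p_j·q_j`. For odd `D` we may halve, giving a classical solution. Conversely a
classical solution `x` gives the scalar solution `A_j = ω^{x_j} I`.
-/

open Matrix ZMod

lemma AddChar.map_sum_eq_prod {ι A M : Type*} [AddCommMonoid A] [CommMonoid M]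
    (ψ : AddChar A M) (s : Finset ι) (f : ι → A) :
    ψ (∑ i ∈ s, f i) = ∏ i ∈ s, ψ (f i) :=
  map_prod ψ.toMonoidHom (fun i => Multiplicative.ofAdd (f i)) s

lemma map_list_prod_ofFn {F G H : Type*} [Monoid G] [Monoid H] [FunLike F G H]
    [MonoidHomClass F G H] (f : F) {K : ℕ} (g : Fin K → G) :
    f (List.ofFn g).prod = (List.ofFn fun j => f (g j)).prod := by
  rw [map_list_prod, List.map_ofFn]
  rfl

lemma rootOfUnity_pow_val {D : ℕ} [NeZero D] (a : ZMod D) :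
    rootOfUnity D ^ a.val = stdAddChar a := by
  rw [rootOfUnity, ← Complex.exp_nat_mul, stdAddChar_apply, toCircle_apply]
  congr 1
  ring

lemma list_prod_ofFn_algebraMap_stdAddChar_pow {D n : ℕ} [NeZero D] {R : Type*} [Ring R]
    [Algebra ℂ R] (r x : Fin n → ZMod D) :
    (List.ofFn fun j => algebraMap ℂ R (stdAddChar (x j)) ^ (r j).val).prod
      = algebraMap ℂ R (stdAddChar (r ⬝ᵥ x)) := by
  simp_rw [← map_pow]
  rw [← map_list_prod_ofFn, List.prod_ofFn]
  simp [← AddChar.map_nsmul_eq_pow, ← AddChar.map_sum_eq_prod, dotProduct]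

/-- `⟨k, p, q⟩` labels the operator `ω^k Z^p X^q = ⨂_l ω^{k_l} Z^{p_l} X^{q_l}` with
`k = ∑_l k_l`; see `pauliMatrix`. -/
@[ext]
structure Heis (D N : ℕ) where
  k : ZMod D
  p : Fin N → ZMod D
  q : Fin N → ZMod D

namespace Heis

variable {D N : ℕ}

instance : Mul (Heis D N) := ⟨fun s t => ⟨s.k + t.k - t.p ⬝ᵥ s.q, s.p + t.p, s.q + t.q⟩⟩

instance : One (Heis D N) := ⟨⟨0, 0, 0⟩⟩

@[simp] lemma mul_k (s t : Heis D N) : (s * t).k = s.k + t.k - t.p ⬝ᵥ s.q := rfl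
@[simp] lemma mul_p (s t : Heis D N) : (s * t).p = s.p + t.p := rfl
@[simp] lemma mul_q (s t : Heis D N) : (s * t).q = s.q + t.q := rfl
@[simp] lemma one_k : (1 : Heis D N).k = 0 := rfl
@[simp] lemma one_p : (1 : Heis D N).p = 0 := rfl
@[simp] lemma one_q : (1 : Heis D N).q = 0 := rfl

instance : Monoid (Heis D N) where
  mul_assoc r s t := by ext <;> simp [add_dotProduct, dotProduct_add] <;> ring
  one_mul t := by ext <;> simp
  mul_one t := by ext <;> simp

def phase (t : Heis D N) : ZMod D := 2 * t.k + t.p ⬝ᵥ t.q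

/-- `phase (s * t) - phase s - phase t = s.p ⬝ᵥ t.q - t.p ⬝ᵥ s.q`, which is exactly what
`s * t = t * s` forces to vanish. -/
lemma phase_mul_of_commute {s t : Heis D N} (h : Commute s t) :
    (s * t).phase = s.phase + t.phase := by
  have hk : (s * t).k = (t * s).k := congrArg k h.eq
  simp only [mul_k] at hk
  simp only [phase, mul_k, mul_p, mul_q, add_dotProduct, dotProduct_add]
  linear_combination hk

lemma phase_pow (t : Heis D N) (m : ℕ) : (t ^ m).phase = m * t.phase := by
  induction m with
  | zero => simp [phase]
  | succ m ih =>
    rw [pow_succ, phase_mul_of_commute (Commute.self_pow t m).symm, ih]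
    push_cast
    ring

lemma phase_list_prod_ofFn {K : ℕ} (t : Fin K → Heis D N) (h : ∀ j k, Commute (t j) (t k)) :
    (List.ofFn t).prod.phase = ∑ j, (t j).phase := by
  induction K with
  | zero => simp [phase]
  | succ K ih =>
    have hcomm : Commute (t 0) (List.ofFn fun j => t j.succ).prod :=
      Commute.list_prod_right _ _ fun x hx => by
        obtain ⟨j, rfl⟩ := List.mem_ofFn.mp hx
        exact h _ _
    rw [List.ofFn_succ, List.prod_cons, phase_mul_of_commute hcomm,
      ih _ fun j k => h _ _, Fin.sum_univ_succ]

lemma mulVec_phase_eq_two_smul [NeZero D] {m n : ℕ} (M : Matrix (Fin m) (Fin n) (ZMod D))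
    (b : Fin m → ZMod D) (t : Fin n → Heis D N)
    (hcomm : ∀ j k, (∃ i, M i j ≠ 0 ∧ M i k ≠ 0) → Commute (t j) (t k))
    (hrow : ∀ i, (List.ofFn fun j => t j ^ (M i j).val).prod = ⟨b i, 0, 0⟩) :
    M *ᵥ (fun j => (t j).phase) = (2 : ZMod D) • b := by
  funext i
  have hpow : ∀ j k, Commute (t j ^ (M i j).val) (t k ^ (M i k).val) := by
    intro j k
    by_cases hj : M i j = 0
    · simp [hj]
    by_cases hk : M i k = 0
    · simp [hk]
    exact (hcomm j k ⟨i, hj, hk⟩).pow_pow _ _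
  calc (M *ᵥ fun j => (t j).phase) i
      = ∑ j, (t j ^ (M i j).val).phase := by simp [mulVec, dotProduct, phase_pow]
    _ = (List.ofFn fun j => t j ^ (M i j).val).prod.phase := (phase_list_prod_ofFn _ hpow).symm
    _ = ((2 : ZMod D) • b) i := by simp [hrow, phase, two_mul]

end Heis

section PauliMatrix

variable {D N : ℕ} [NeZero D]

noncomputable def pauliMatrix (t : Heis D N) : Matrix (Fin N → ZMod D) (Fin N → ZMod D) ℂ :=
  of fun f g => if f = g + t.q then stdAddChar (t.k + t.p ⬝ᵥ f) else 0

lemma pauliMatrix_one : pauliMatrix (1 : Heis D N) = 1 := by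
  ext f g
  simp [pauliMatrix, one_apply]

lemma pauliMatrix_mul (s t : Heis D N) :
    pauliMatrix (s * t) = pauliMatrix s * pauliMatrix t := by
  ext f g
  simp only [pauliMatrix, mul_apply, of_apply, ite_mul, mul_ite, zero_mul, mul_zero,
    Finset.sum_ite_eq', Finset.mem_univ, if_true, Heis.mul_q, Heis.mul_k, Heis.mul_p]
  by_cases h : f = g + t.q + s.q
  · rw [if_pos (by rw [h]; abel), if_pos h, ← AddChar.map_add_eq_mul]
    congr 1
    rw [show g + t.q = f - s.q by rw [h]; abel, dotProduct_sub, add_dotProduct]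
    ring
  · rw [if_neg (by rintro rfl; exact h (by abel)), if_neg h]

@[simps]
noncomputable def pauliHom : Heis D N →* Matrix (Fin N → ZMod D) (Fin N → ZMod D) ℂ where
  toFun := pauliMatrix
  map_one' := pauliMatrix_one
  map_mul' := pauliMatrix_mul

lemma pauliMatrix_injective : Function.Injective (pauliMatrix : Heis D N → _) := by
  intro s t h
  have entry (f g : Fin N → ZMod D) := congrFun (congrFun h f) g
  simp only [pauliMatrix, of_apply] at entry
  have hq : s.q = t.q := by
    by_contra hne
    have := entry s.q 0
    rw [zero_add, if_pos rfl, if_neg (by simpa using hne)] at this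
    exact Circle.coe_ne_zero _ this
  have hchar (f : Fin N → ZMod D) : s.k + s.p ⬝ᵥ f = t.k + t.p ⬝ᵥ f := by
    have := entry f (f - s.q)
    rw [sub_add_cancel, if_pos rfl, hq, sub_add_cancel, if_pos rfl] at this
    exact injective_stdAddChar this
  have hk : s.k = t.k := by simpa using hchar 0
  have hp : s.p = t.p := by
    funext l
    simpa [hk] using hchar (Pi.single l 1)
  ext <;> simp [hk, hp, hq]

lemma pauliMatrix_scalar (x : ZMod D) :
    pauliMatrix (⟨x, 0, 0⟩ : Heis D N) = stdAddChar x • 1 := by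
  ext f g
  simp [pauliMatrix, one_apply]

lemma ZMat_eq_diagonal : ZMat D = diagonal fun j => stdAddChar j := by
  ext i j
  by_cases h : i = j
  · simp [ZMat, h, rootOfUnity_pow_val]
  · simp [ZMat, h]

lemma XMat_pow (a : ℕ) : XMat D ^ a = of fun i j => if i = j + (a : ZMod D) then 1 else 0 := by
  induction a with
  | zero => ext i j; simp [one_apply]
  | succ a ih =>
    ext i j
    rw [pow_succ, ih, mul_apply]
    simp [XMat, add_assoc, add_comm (1 : ZMod D)]

lemma pauli1_apply (k p q i j : ZMod D) :
    (rootOfUnity D ^ k.val • (ZMat D ^ p.val * XMat D ^ q.val)) i j =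
      if i = j + q then stdAddChar (k + p * i) else 0 := by
  rw [ZMat_eq_diagonal, diagonal_pow, XMat_pow, Matrix.smul_apply, diagonal_mul, of_apply,
    natCast_zmod_val, rootOfUnity_pow_val, Pi.pow_apply, ← AddChar.map_nsmul_eq_pow,
    nsmul_eq_mul, natCast_zmod_val]
  split_ifs <;> simp [AddChar.map_add_eq_mul]

lemma tensorFun_pauli1 (k p q : Fin N → ZMod D) :
    tensorFun (fun l => rootOfUnity D ^ (k l).val • (ZMat D ^ (p l).val * XMat D ^ (q l).val))
      = pauliMatrix ⟨∑ l, k l, p, q⟩ := by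
  ext f g
  simp only [tensorFun, pauliMatrix, of_apply, pauli1_apply, Finset.prod_ite_zero,
    Finset.mem_univ, forall_const, funext_iff, Pi.add_apply, ← AddChar.map_sum_eq_prod,
    Finset.sum_add_distrib, dotProduct]

lemma IsPauliN.exists_eq_pauliMatrix {σ : Matrix (Fin N → ZMod D) (Fin N → ZMod D) ℂ}
    (h : IsPauliN D N σ) : ∃ t : Heis D N, σ = pauliMatrix t := by
  obtain ⟨σs, hσs, rfl⟩ := h
  choose k p q hkpq using hσs
  exact ⟨⟨∑ l, k l, p, q⟩, by rw [← tensorFun_pauli1, funext hkpq]⟩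

lemma isPauliN_pauliMatrix (t : Heis D N) (j : Fin N) : IsPauliN D N (pauliMatrix t) := by
  let k : Fin N → ZMod D := Pi.single j t.k
  refine ⟨fun l => rootOfUnity D ^ (k l).val • (ZMat D ^ (t.p l).val * XMat D ^ (t.q l).val),
    fun l => ⟨k l, t.p l, t.q l, rfl⟩, ?_⟩
  rw [tensorFun_pauli1, Fintype.sum_pi_single']

end PauliMatrix

/-- for `D` an odd positive integer, the LCS `(M,b)` over `ℤ_D` has a
quantum solution on `(ℂ^D)^{⊗n}` consisting of `n`-quDit generalized Pauli operators iff
it has a classical solution. -/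
theorem pauli_quantum_iff_classical (D : ℕ) [NeZero D] (hD : Odd D) {m n : ℕ}
    (M : Matrix (Fin m) (Fin n) (ZMod D)) (b : Fin m → ZMod D) :
    (∃ A : Fin n → Matrix (Fin n → ZMod D) (Fin n → ZMod D) ℂ,
      (∀ j, IsPauliN D n (A j)) ∧
      (∀ j, A j ^ D = 1) ∧
      (∀ j k : Fin n, (∃ i, M i j ≠ 0 ∧ M i k ≠ 0) → Commute (A j) (A k)) ∧
      (∀ i : Fin m, (List.ofFn fun j => A j ^ (M i j).val).prod
          = rootOfUnity D ^ (b i).val • 1)) ↔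
      ∃ x : Fin n → ZMod D, M.mulVec x = b := by
  constructor
  · rintro ⟨A, hPauli, -, hcomm, hrow⟩
    choose t ht using fun j => (hPauli j).exists_eq_pauliMatrix
    obtain rfl : A = fun j => pauliMatrix (t j) := funext ht
    have htwo : M *ᵥ (fun j => (t j).phase) = (2 : ZMod D) • b := by
      refine Heis.mulVec_phase_eq_two_smul M b t
        (fun j k hjk => Commute.of_map (f := pauliHom) pauliMatrix_injective (hcomm j k hjk))
        (fun i => pauliMatrix_injective ?_)
      change pauliHom _ = _
      rw [map_list_prod_ofFn, pauliMatrix_scalar, ← rootOfUnity_pow_val, ← hrow i]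
      simp only [map_pow, pauliHom_apply]
    obtain ⟨u, hu⟩ : ∃ u : ZMod D, u * 2 = 1 := by
      have : IsUnit ((2 : ℕ) : ZMod D) := (isUnit_iff_coprime 2 D).mpr hD.coprime_two_left
      exact_mod_cast this.exists_left_inv
    exact ⟨u • fun j => (t j).phase, by rw [mulVec_smul, htwo, smul_smul, hu, one_smul]⟩
  · rintro ⟨x, rfl⟩
    refine ⟨fun j => algebraMap ℂ _ (stdAddChar (x j)), fun j => ?_, fun j => ?_,
      fun j k _ => (Commute.all _ _).map _, fun i => ?_⟩
    · simpa only [pauliMatrix_scalar, Algebra.algebraMap_eq_smul_one] using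
        isPauliN_pauliMatrix (⟨x j, 0, 0⟩ : Heis D n) j
    · rw [← map_pow, ← AddChar.map_nsmul_eq_pow, nsmul_eq_mul, natCast_self, zero_mul,
        AddChar.map_zero_eq_one, map_one]
    · rw [list_prod_ofFn_algebraMap_stdAddChar_pow, rootOfUnity_pow_val,
        Algebra.algebraMap_eq_smul_one]
      rfl
end

section
/- Let d be prime and γ_4, γ_5, γ_6, γ_7, γ_8, γ_9 be nonzero elements of the field ℤ_d. Let M be the 6×9 matrix over ℤ_d with rows (1,1,1,0,0,0,0,0,0), (0,0,0,1,1,1,0,0,0), (0,0,0,0,0,0,1,1,1), (1,0,0,γ_4,0,0,γ_7,0,0), (0,1,0,0,γ_5,0,0,γ_8,0), (0,0,1,0,0,γ_6,0,0,γ_9). Then rank(M) = 5 if γ_4 = γ_5 = γ_6 and γ_7 = γ_8 = γ_9, and rank(M) = 6 otherwise. -/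
open Matrix

private lemma cons_val_five' {α : Type*} {m : ℕ} (x : α)
    (u : Fin m.succ.succ.succ.succ.succ → α) :
    vecCons x u 5 = vecHead (vecTail (vecTail (vecTail (vecTail u)))) := rfl

private lemma cons_val_six' {α : Type*} {m : ℕ} (x : α)
    (u : Fin m.succ.succ.succ.succ.succ.succ → α) :
    vecCons x u 6 = vecHead (vecTail (vecTail (vecTail (vecTail (vecTail u))))) := rfl

private lemma cons_val_seven' {α : Type*} {m : ℕ} (x : α)
    (u : Fin m.succ.succ.succ.succ.succ.succ.succ → α) :
    vecCons x u 7 = vecHead (vecTail (vecTail (vecTail (vecTail (vecTail (vecTail u)))))) := rfl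

private lemma cons_val_eight' {α : Type*} {m : ℕ} (x : α)
    (u : Fin m.succ.succ.succ.succ.succ.succ.succ.succ → α) :
    vecCons x u 8 =
      vecHead (vecTail (vecTail (vecTail (vecTail (vecTail (vecTail (vecTail u))))))) := rfl

/-- for `d` prime and nonzero `γ₄,…,γ₉ ∈ ℤ_d`, the 6×9 matrix of the
reduced magic square LCS has rank 5 if `γ₄ = γ₅ = γ₆` and `γ₇ = γ₈ = γ₉`, and rank 6
otherwise (rank over the field `ℤ_d`). -/
theorem magicSquare_rank (d : ℕ) (hd : d.Prime) [Fact d.Prime]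
    (γ4 γ5 γ6 γ7 γ8 γ9 : ZMod d)
    (h4 : γ4 ≠ 0) (h5 : γ5 ≠ 0) (h6 : γ6 ≠ 0)
    (h7 : γ7 ≠ 0) (h8 : γ8 ≠ 0) (h9 : γ9 ≠ 0) :
    ((γ4 = γ5 ∧ γ5 = γ6 ∧ γ7 = γ8 ∧ γ8 = γ9) →
      (Matrix.of
        ![![1, 1, 1, 0, 0, 0, 0, 0, 0],
          ![0, 0, 0, 1, 1, 1, 0, 0, 0],
          ![0, 0, 0, 0, 0, 0, 1, 1, 1],
          ![1, 0, 0, γ4, 0, 0, γ7, 0, 0],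
          ![0, 1, 0, 0, γ5, 0, 0, γ8, 0],
          ![0, 0, 1, 0, 0, γ6, 0, 0, γ9]] :
            Matrix (Fin 6) (Fin 9) (ZMod d)).rank = 5) ∧
    (¬ (γ4 = γ5 ∧ γ5 = γ6 ∧ γ7 = γ8 ∧ γ8 = γ9) →
      (Matrix.of
        ![![1, 1, 1, 0, 0, 0, 0, 0, 0],
          ![0, 0, 0, 1, 1, 1, 0, 0, 0],
          ![0, 0, 0, 0, 0, 0, 1, 1, 1],
          ![1, 0, 0, γ4, 0, 0, γ7, 0, 0],
          ![0, 1, 0, 0, γ5, 0, 0, γ8, 0],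
          ![0, 0, 1, 0, 0, γ6, 0, 0, γ9]] :
            Matrix (Fin 6) (Fin 9) (ZMod d)).rank = 6) := by
  set M : Matrix (Fin 6) (Fin 9) (ZMod d) :=
    Matrix.of
        ![![1, 1, 1, 0, 0, 0, 0, 0, 0],
          ![0, 0, 0, 1, 1, 1, 0, 0, 0],
          ![0, 0, 0, 0, 0, 0, 1, 1, 1],
          ![1, 0, 0, γ4, 0, 0, γ7, 0, 0],
          ![0, 1, 0, 0, γ5, 0, 0, γ8, 0],
          ![0, 0, 1, 0, 0, γ6, 0, 0, γ9]] with hM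
  have hvec : ∀ c : Fin 6 → ZMod d, Mᵀ.mulVec c =
      ![c 0 + c 3, c 0 + c 4, c 0 + c 5,
        c 1 + γ4 * c 3, c 1 + γ5 * c 4, c 1 + γ6 * c 5,
        c 2 + γ7 * c 3, c 2 + γ8 * c 4, c 2 + γ9 * c 5] := by
    intro c
    funext j
    fin_cases j <;>
      simp [hM, Matrix.mulVec, dotProduct, Fin.sum_univ_six,
        cons_val_five', cons_val_six', cons_val_seven', cons_val_eight',
        Matrix.vecHead, Matrix.vecTail] <;> ring
  have hker : ∀ c : Fin 6 → ZMod d, c ∈ LinearMap.ker Mᵀ.mulVecLin ↔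
      (c 0 + c 3 = 0 ∧ c 0 + c 4 = 0 ∧ c 0 + c 5 = 0 ∧
       c 1 + γ4 * c 3 = 0 ∧ c 1 + γ5 * c 4 = 0 ∧ c 1 + γ6 * c 5 = 0 ∧
       c 2 + γ7 * c 3 = 0 ∧ c 2 + γ8 * c 4 = 0 ∧ c 2 + γ9 * c 5 = 0) := by
    intro c
    rw [LinearMap.mem_ker, Matrix.mulVecLin_apply, hvec]
    constructor
    · intro h
      exact ⟨congrFun h 0, congrFun h 1, congrFun h 2, congrFun h 3, congrFun h 4,
        congrFun h 5, congrFun h 6, congrFun h 7, congrFun h 8⟩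
    · rintro ⟨e1, e2, e3, e4, e5, e6, e7, e8, e9⟩
      funext j
      fin_cases j <;> assumption
  have hrn : M.rank + Module.finrank (ZMod d) (LinearMap.ker Mᵀ.mulVecLin) = 6 := by
    rw [← Matrix.rank_transpose M, Matrix.rank,
      LinearMap.finrank_range_add_finrank_ker]
    simp
  constructor
  · rintro ⟨q45, q56, q78, q89⟩
    have hv : (![1, γ4, γ7, -1, -1, -1] : Fin 6 → ZMod d) ≠ 0 := by
      intro h
      exact one_ne_zero (congrFun h 0)
    have hkv : LinearMap.ker Mᵀ.mulVecLin =
        Submodule.span (ZMod d) {![1, γ4, γ7, -1, -1, -1]} := by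
      apply le_antisymm
      · intro c hc
        obtain ⟨e1, e2, e3, e4, e5, e6, e7, e8, e9⟩ := (hker c).1 hc
        rw [Submodule.mem_span_singleton]
        refine ⟨c 0, ?_⟩
        funext i
        fin_cases i
        · simp
        · simp only [Pi.smul_apply, smul_eq_mul]
          show c 0 * γ4 = c 1
          linear_combination (-1 : ZMod d) * e4 + γ4 * e1
        · simp only [Pi.smul_apply, smul_eq_mul]
          show c 0 * γ7 = c 2
          linear_combination (-1 : ZMod d) * e7 + γ7 * e1
        · simp only [Pi.smul_apply, smul_eq_mul]
          show c 0 * (-1) = c 3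
          linear_combination (-1 : ZMod d) * e1
        · simp only [Pi.smul_apply, smul_eq_mul]
          show c 0 * (-1) = c 4
          linear_combination (-1 : ZMod d) * e2
        · simp only [Pi.smul_apply, smul_eq_mul]
          show c 0 * (-1) = c 5
          linear_combination (-1 : ZMod d) * e3
      · rw [Submodule.span_le, Set.singleton_subset_iff, SetLike.mem_coe, hker]
        refine ⟨?_, ?_, ?_, ?_, ?_, ?_, ?_, ?_, ?_⟩
        · show (1 : ZMod d) + (-1) = 0; ring
        · show (1 : ZMod d) + (-1) = 0; ring
        · show (1 : ZMod d) + (-1) = 0; ring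
        · show γ4 + γ4 * (-1) = 0; ring
        · show γ4 + γ5 * (-1) = 0; rw [q45]; ring
        · show γ4 + γ6 * (-1) = 0; rw [q45, q56]; ring
        · show γ7 + γ7 * (-1) = 0; ring
        · show γ7 + γ8 * (-1) = 0; rw [q78]; ring
        · show γ7 + γ9 * (-1) = 0; rw [q78, q89]; ring
    rw [hkv, finrank_span_singleton hv] at hrn
    omega
  · intro hcase
    have hbot : LinearMap.ker Mᵀ.mulVecLin = ⊥ := by
      rw [eq_bot_iff]
      intro c hc
      obtain ⟨e1, e2, e3, e4, e5, e6, e7, e8, e9⟩ := (hker c).1 hc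
      have hc0 : c 0 = 0 := by
        by_contra h0
        refine hcase ⟨?_, ?_, ?_, ?_⟩
        · refine mul_right_cancel₀ h0 ?_
          linear_combination (-1 : ZMod d) * e4 + e5 + γ4 * e1 - γ5 * e2
        · refine mul_right_cancel₀ h0 ?_
          linear_combination (-1 : ZMod d) * e5 + e6 + γ5 * e2 - γ6 * e3
        · refine mul_right_cancel₀ h0 ?_
          linear_combination (-1 : ZMod d) * e7 + e8 + γ7 * e1 - γ8 * e2
        · refine mul_right_cancel₀ h0 ?_
          linear_combination (-1 : ZMod d) * e8 + e9 + γ8 * e2 - γ9 * e3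
      have hc3 : c 3 = 0 := by linear_combination e1 - hc0
      have hc4 : c 4 = 0 := by linear_combination e2 - hc0
      have hc5 : c 5 = 0 := by linear_combination e3 - hc0
      have hc1 : c 1 = 0 := by linear_combination e4 - γ4 * hc3
      have hc2 : c 2 = 0 := by linear_combination e7 - γ7 * hc3
      rw [Submodule.mem_bot]
      funext i
      fin_cases i <;> assumption
    rw [hbot] at hrn
    simp only [finrank_bot] at hrn
    omega
end

section
/- Let d be prime and γ_5, γ_6, γ_7, γ_8, γ_9, γ_10 be nonzero elements of the field ℤ_d. Let M be the 5×10 matrix over ℤ_d with rows (1,1,1,1,0,0,0,0,0,0), (1,0,0,0,1,1,1,0,0,0), (0,1,0,0,γ_5,0,0,1,1,0), (0,0,1,0,0,γ_6,0,γ_8,0,1), (0,0,0,1,0,0,γ_7,0,γ_9,γ_10). Then rank(M) = 4 if γ_5 = γ_6 = γ_7 = γ_8 = γ_9 = γ_10 = −1, and rank(M) = 5 otherwise. -/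
/-!
The rank of `M` is `5` minus the dimension of its left kernel `{g | g ᵥ* M = 0}`. That kernel
consists of the multiples `g₀ • (1, -1, -1, -1, -1)` with `g₀ * (γ + 1) = 0` for all six `γ`, so
it is zero unless every `γ` equals `-1`, and a line when they all do.
-/

open Module Matrix

theorem Matrix.rank_add_finrank_ker_vecMulLinear {m n K : Type*} [Field K] [Fintype m] [Fintype n]
    (A : Matrix m n K) : A.rank + finrank K (LinearMap.ker A.vecMulLinear) = Fintype.card m := by
  have hT : Aᵀ.mulVecLin = A.vecMulLinear := LinearMap.ext fun g => mulVec_transpose A g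
  rw [← rank_transpose, Matrix.rank, hT, LinearMap.finrank_range_add_finrank_ker,
    Module.finrank_fintype_fun_eq_card]

def pentagramMatrix {R : Type*} [CommRing R] (γ5 γ6 γ7 γ8 γ9 γ10 : R) :
    Matrix (Fin 5) (Fin 10) R :=
  Matrix.of
    ![![1, 1, 1, 1, 0, 0, 0, 0, 0, 0],
      ![1, 0, 0, 0, 1, 1, 1, 0, 0, 0],
      ![0, 1, 0, 0, γ5, 0, 0, 1, 1, 0],
      ![0, 0, 1, 0, 0, γ6, 0, γ8, 0, 1],
      ![0, 0, 0, 1, 0, 0, γ7, 0, γ9, γ10]]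

section
variable {R : Type*} [CommRing R] (γ5 γ6 γ7 γ8 γ9 γ10 : R)

theorem vecMul_pentagramMatrix_eq_zero_iff (g : Fin 5 → R) :
    g ᵥ* pentagramMatrix γ5 γ6 γ7 γ8 γ9 γ10 = 0 ↔
      g = g 0 • ![1, -1, -1, -1, -1] ∧ g 0 * (γ5 + 1) = 0 ∧ g 0 * (γ6 + 1) = 0 ∧
        g 0 * (γ7 + 1) = 0 ∧ g 0 * (γ8 + 1) = 0 ∧ g 0 * (γ9 + 1) = 0 ∧ g 0 * (γ10 + 1) = 0 := by
  simp only [pentagramMatrix, funext_iff, Fin.forall_fin_succ, Fin.isValue, vecMul_cons, vecHead,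
    vecTail, smul_cons, smul_eq_mul, mul_one, mul_zero, smul_empty, Function.comp_apply,
    Fin.succ_zero_eq_one, Fin.succ_one_eq_two, Fin.reduceSucc, empty_vecMul, add_zero, add_cons,
    cons_val_zero, cons_val_one, cons_val, zero_add, empty_add_empty, Pi.zero_apply,
    cons_val_succ, cons_val_fin_one, IsEmpty.forall_iff, and_true, mul_neg, true_and]
  -- The first four columns say `g i = -g 0` for `i ≠ 0`; given that, the column with entries
  -- `1, γ` in rows `i, j` reads `-g 0 * (γ + 1) = 0`.
  grind

theorem vecMul_pentagramMatrix_eq_zero_iff_of_noZeroDivisors [NoZeroDivisors R] (g : Fin 5 → R) :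
    g ᵥ* pentagramMatrix γ5 γ6 γ7 γ8 γ9 γ10 = 0 ↔
      g = g 0 • ![1, -1, -1, -1, -1] ∧
        (g 0 = 0 ∨ γ5 = -1 ∧ γ6 = -1 ∧ γ7 = -1 ∧ γ8 = -1 ∧ γ9 = -1 ∧ γ10 = -1) := by
  simp only [vecMul_pentagramMatrix_eq_zero_iff, mul_eq_zero, ← eq_neg_iff_add_eq_zero,
    ← or_and_left]

end

section
variable {K : Type*} [Field K]

theorem pentagramMatrix_rank_eq_five {γ5 γ6 γ7 γ8 γ9 γ10 : K}
    (h : ¬ (γ5 = -1 ∧ γ6 = -1 ∧ γ7 = -1 ∧ γ8 = -1 ∧ γ9 = -1 ∧ γ10 = -1)) :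
    (pentagramMatrix γ5 γ6 γ7 γ8 γ9 γ10).rank = 5 := by
  have hker : LinearMap.ker (pentagramMatrix γ5 γ6 γ7 γ8 γ9 γ10).vecMulLinear = ⊥ := by
    refine LinearMap.ker_eq_bot'.2 fun g hg => ?_
    obtain ⟨hg, hg0⟩ := (vecMul_pentagramMatrix_eq_zero_iff_of_noZeroDivisors _ _ _ _ _ _ g).1 hg
    rw [hg, hg0.resolve_right h, zero_smul]
  have := (pentagramMatrix γ5 γ6 γ7 γ8 γ9 γ10).rank_add_finrank_ker_vecMulLinear
  rwa [hker, finrank_bot, add_zero, Fintype.card_fin] at this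

theorem pentagramMatrix_neg_one_rank :
    (pentagramMatrix (-1 : K) (-1) (-1) (-1) (-1) (-1)).rank = 4 := by
  have hker : LinearMap.ker (pentagramMatrix (-1 : K) (-1) (-1) (-1) (-1) (-1)).vecMulLinear =
      K ∙ ![1, -1, -1, -1, -1] := by
    ext g
    simp only [LinearMap.mem_ker, vecMulLinear_apply, Submodule.mem_span_singleton,
      vecMul_pentagramMatrix_eq_zero_iff_of_noZeroDivisors, and_self, or_true, and_true]
    refine ⟨fun hg => ⟨g 0, hg.symm⟩, ?_⟩
    rintro ⟨a, rfl⟩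
    simp
  have hv : (![1, -1, -1, -1, -1] : Fin 5 → K) ≠ 0 := fun h => one_ne_zero (congrFun h 0)
  have := (pentagramMatrix (-1 : K) (-1) (-1) (-1) (-1) (-1)).rank_add_finrank_ker_vecMulLinear
  rw [hker, finrank_span_singleton hv, Fintype.card_fin] at this
  omega

end

theorem magicPentagram_rank_general (d : ℕ) [Fact d.Prime]
    (γ5 γ6 γ7 γ8 γ9 γ10 : ZMod d) :
    ((γ5 = -1 ∧ γ6 = -1 ∧ γ7 = -1 ∧ γ8 = -1 ∧ γ9 = -1 ∧ γ10 = -1) →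
      (Matrix.of
        ![![1, 1, 1, 1, 0, 0, 0, 0, 0, 0],
          ![1, 0, 0, 0, 1, 1, 1, 0, 0, 0],
          ![0, 1, 0, 0, γ5, 0, 0, 1, 1, 0],
          ![0, 0, 1, 0, 0, γ6, 0, γ8, 0, 1],
          ![0, 0, 0, 1, 0, 0, γ7, 0, γ9, γ10]] :
            Matrix (Fin 5) (Fin 10) (ZMod d)).rank = 4) ∧
    (¬ (γ5 = -1 ∧ γ6 = -1 ∧ γ7 = -1 ∧ γ8 = -1 ∧ γ9 = -1 ∧ γ10 = -1) →
      (Matrix.of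
        ![![1, 1, 1, 1, 0, 0, 0, 0, 0, 0],
          ![1, 0, 0, 0, 1, 1, 1, 0, 0, 0],
          ![0, 1, 0, 0, γ5, 0, 0, 1, 1, 0],
          ![0, 0, 1, 0, 0, γ6, 0, γ8, 0, 1],
          ![0, 0, 0, 1, 0, 0, γ7, 0, γ9, γ10]] :
            Matrix (Fin 5) (Fin 10) (ZMod d)).rank = 5) := by
  refine ⟨?_, pentagramMatrix_rank_eq_five⟩
  rintro ⟨rfl, rfl, rfl, rfl, rfl, rfl⟩
  exact pentagramMatrix_neg_one_rank

/-- for `d` prime and nonzero `γ₅,…,γ₁₀ ∈ ℤ_d`, the 5×10 matrix of the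
reduced magic pentagram LCS has rank 4 if `γ₅ = γ₆ = γ₇ = γ₈ = γ₉ = γ₁₀ = -1`, and
rank 5 otherwise (rank over the field `ℤ_d`). -/
theorem magicPentagram_rank (d : ℕ) (hd : d.Prime) [Fact d.Prime]
    (γ5 γ6 γ7 γ8 γ9 γ10 : ZMod d)
    (h5 : γ5 ≠ 0) (h6 : γ6 ≠ 0) (h7 : γ7 ≠ 0)
    (h8 : γ8 ≠ 0) (h9 : γ9 ≠ 0) (h10 : γ10 ≠ 0) :
    ((γ5 = -1 ∧ γ6 = -1 ∧ γ7 = -1 ∧ γ8 = -1 ∧ γ9 = -1 ∧ γ10 = -1) →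
      (Matrix.of
        ![![1, 1, 1, 1, 0, 0, 0, 0, 0, 0],
          ![1, 0, 0, 0, 1, 1, 1, 0, 0, 0],
          ![0, 1, 0, 0, γ5, 0, 0, 1, 1, 0],
          ![0, 0, 1, 0, 0, γ6, 0, γ8, 0, 1],
          ![0, 0, 0, 1, 0, 0, γ7, 0, γ9, γ10]] :
            Matrix (Fin 5) (Fin 10) (ZMod d)).rank = 4) ∧
    (¬ (γ5 = -1 ∧ γ6 = -1 ∧ γ7 = -1 ∧ γ8 = -1 ∧ γ9 = -1 ∧ γ10 = -1) →
      (Matrix.of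
        ![![1, 1, 1, 1, 0, 0, 0, 0, 0, 0],
          ![1, 0, 0, 0, 1, 1, 1, 0, 0, 0],
          ![0, 1, 0, 0, γ5, 0, 0, 1, 1, 0],
          ![0, 0, 1, 0, 0, γ6, 0, γ8, 0, 1],
          ![0, 0, 0, 1, 0, 0, γ7, 0, γ9, γ10]] :
            Matrix (Fin 5) (Fin 10) (ZMod d)).rank = 5) :=
  magicPentagram_rank_general d γ5 γ6 γ7 γ8 γ9 γ10
end

section
/- Let d > 1 be odd, let γ_4, γ_5, γ_6, γ_7, γ_8, γ_9 ∈ {1, −1} ⊂ ℤ_d, and let b ∈ ℤ_d^6. Consider the system over ℤ_d: x_1+x_2+x_3=b_1, x_4+x_5+x_6=b_2, x_7+x_8+x_9=b_3, x_1+γ_4x_4+γ_7x_7=b_4, x_2+γ_5x_5+γ_8x_8=b_5, x_3+γ_6x_6+γ_9x_9=b_6. If this system has no solution in ℤ_d^9, then γ_4 = γ_5 = γ_6 and γ_7 = γ_8 = γ_9. -/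
/-- If `α ≠ β` with `α, β ∈ {1,-1}` in `ZMod d` with `d` odd, we can solve the
two-variable system `p + q = s`, `α*p + β*q = c`. -/
lemma pair_solve (d : ℕ) (hodd : Odd d) (hd : 1 < d) (α β : ZMod d)
    (hα : α = 1 ∨ α = -1) (hβ : β = 1 ∨ β = -1) (hne : α ≠ β) (s c : ZMod d) :
    ∃ p q : ZMod d, p + q = s ∧ α * p + β * q = c := by
  haveI : NeZero d := ⟨by omega⟩
  have h2 : IsUnit (2 : ZMod d) := by
    have : IsUnit ((2 : ℕ) : ZMod d) := by
      rw [ZMod.isUnit_iff_coprime]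
      exact Nat.coprime_two_left.mpr hodd
    simpa using this
  have hu : IsUnit (β - α) := by
    rcases hα with rfl | rfl <;> rcases hβ with rfl | rfl
    · exact absurd rfl hne
    · have e : (-1 - 1 : ZMod d) = -2 := by ring
      rw [e]; exact h2.neg
    · have e : (1 - -1 : ZMod d) = 2 := by ring
      rw [e]; exact h2
    · exact absurd rfl hne
  obtain ⟨v, hv⟩ := hu.exists_right_inv
  refine ⟨s - v * (c - α * s), v * (c - α * s), by ring, ?_⟩
  have : α * (s - v * (c - α * s)) + β * (v * (c - α * s))
      = α * s + ((β - α) * v) * (c - α * s) := by ring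
  rw [this, hv]; ring

/-- If `α, β, γ ∈ {1,-1}` are not all equal, we can solve
`p + q + r = s`, `α*p + β*q + γ*r = c`. -/
lemma triple_solve (d : ℕ) (hodd : Odd d) (hd : 1 < d) (α β γ : ZMod d)
    (hα : α = 1 ∨ α = -1) (hβ : β = 1 ∨ β = -1) (hγ : γ = 1 ∨ γ = -1)
    (hne : ¬ (α = β ∧ β = γ)) (s c : ZMod d) :
    ∃ p q r : ZMod d, p + q + r = s ∧ α * p + β * q + γ * r = c := by
  by_cases hab : α = β
  · have hbc : β ≠ γ := fun h => hne ⟨hab, h⟩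
    obtain ⟨q, r, h1, h2⟩ := pair_solve d hodd hd β γ hβ hγ hbc s c
    exact ⟨0, q, r, by simpa using h1, by simpa using h2⟩
  · obtain ⟨p, q, h1, h2⟩ := pair_solve d hodd hd α β hα hβ hab s c
    exact ⟨p, q, 0, by simpa using h1, by simpa using h2⟩

/-- for odd `d > 1`, `γᵢ ∈ {1, -1} ⊆ ℤ_d` and `b ∈ ℤ_d^6`, if the reduced
magic square system `x₁+x₂+x₃=b₁`, `x₄+x₅+x₆=b₂`, `x₇+x₈+x₉=b₃`, `x₁+γ₄x₄+γ₇x₇=b₄`,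
`x₂+γ₅x₅+γ₈x₈=b₅`, `x₃+γ₆x₆+γ₉x₉=b₆` has no solution in `ℤ_d^9`, then `γ₄ = γ₅ = γ₆`
and `γ₇ = γ₈ = γ₉`. -/
theorem magicSquare_unsat_coeffs (d : ℕ) (hodd : Odd d) (hd : 1 < d)
    (γ4 γ5 γ6 γ7 γ8 γ9 : ZMod d)
    (h4 : γ4 = 1 ∨ γ4 = -1) (h5 : γ5 = 1 ∨ γ5 = -1) (h6 : γ6 = 1 ∨ γ6 = -1)
    (h7 : γ7 = 1 ∨ γ7 = -1) (h8 : γ8 = 1 ∨ γ8 = -1) (h9 : γ9 = 1 ∨ γ9 = -1)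
    (b : Fin 6 → ZMod d)
    (hns : ¬ ∃ x : Fin 9 → ZMod d,
      x 0 + x 1 + x 2 = b 0 ∧
      x 3 + x 4 + x 5 = b 1 ∧
      x 6 + x 7 + x 8 = b 2 ∧
      x 0 + γ4 * x 3 + γ7 * x 6 = b 3 ∧
      x 1 + γ5 * x 4 + γ8 * x 7 = b 4 ∧
      x 2 + γ6 * x 5 + γ9 * x 8 = b 5) :
    (γ4 = γ5 ∧ γ5 = γ6) ∧ (γ7 = γ8 ∧ γ8 = γ9) := by
  constructor
  · by_contra hne
    obtain ⟨p, q, r, h1, h2⟩ := triple_solve d hodd hd γ4 γ5 γ6 h4 h5 h6 hne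
      (b 1) (b 3 + b 4 + b 5 - b 0 - γ7 * b 2)
    refine absurd ⟨![b 3 - γ4 * p - γ7 * b 2, b 4 - γ5 * q, b 5 - γ6 * r,
        p, q, r, b 2, 0, 0], ?_, ?_, ?_, ?_, ?_, ?_⟩ hns
    · show b 3 - γ4 * p - γ7 * b 2 + (b 4 - γ5 * q) + (b 5 - γ6 * r) = b 0
      linear_combination -h2
    · show p + q + r = b 1; exact h1
    · show b 2 + 0 + 0 = b 2; ring
    · show b 3 - γ4 * p - γ7 * b 2 + γ4 * p + γ7 * b 2 = b 3; ring
    · show b 4 - γ5 * q + γ5 * q + γ8 * 0 = b 4; ring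
    · show b 5 - γ6 * r + γ6 * r + γ9 * 0 = b 5; ring
  · by_contra hne
    obtain ⟨p, q, r, h1, h2⟩ := triple_solve d hodd hd γ7 γ8 γ9 h7 h8 h9 hne
      (b 2) (b 3 + b 4 + b 5 - b 0 - γ4 * b 1)
    refine absurd ⟨![b 3 - γ4 * b 1 - γ7 * p, b 4 - γ8 * q, b 5 - γ9 * r,
        b 1, 0, 0, p, q, r], ?_, ?_, ?_, ?_, ?_, ?_⟩ hns
    · show b 3 - γ4 * b 1 - γ7 * p + (b 4 - γ8 * q) + (b 5 - γ9 * r) = b 0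
      linear_combination -h2
    · show b 1 + 0 + 0 = b 1; ring
    · show p + q + r = b 2; exact h1
    · show b 3 - γ4 * b 1 - γ7 * p + γ4 * b 1 + γ7 * p = b 3; ring
    · show b 4 - γ8 * q + γ5 * 0 + γ8 * q = b 4; ring
    · show b 5 - γ9 * r + γ6 * 0 + γ9 * r = b 5; ring
end

section
/- Let D be odd. For every n-quDit generalized Pauli operator σ on (ℂ^D)^{⊗n}, the trace tr(Π_D^{⊗n} σ) is a D-th root of unity, so there is a well-defined map v assigning to each n-quDit generalized Pauli σ the element v(σ) ∈ ℤ_D with ω^{v(σ)} = tr(Π_D^{⊗n} σ). This map satisfies: v(ω^j I) = j for all j ∈ ℤ_D; v(σ ⊗ τ) = v(σ) + v(τ) mod D; v(σ^j) = j·v(σ) mod D; and v(στ) = v(σ) + v(τ) mod D whenever σ and τ are commuting n-quDit generalized Pauli operators. -/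
/-- The `n`-fold tensor power `Π_D^{⊗n}` of the parity operator. -/
noncomputable def parityN (D n : ℕ) : Matrix (Fin n → ZMod D) (Fin n → ZMod D) ℂ :=
  tensorFun fun _ : Fin n => parityMat D

/-- The tensor product of an `n`-quDit matrix and an `n'`-quDit matrix, as an
`(n + n')`-quDit matrix. -/
noncomputable def tensorPair {D n n' : ℕ}
    (σ : Matrix (Fin n → ZMod D) (Fin n → ZMod D) ℂ)
    (τ : Matrix (Fin n' → ZMod D) (Fin n' → ZMod D) ℂ) :
    Matrix (Fin (n + n') → ZMod D) (Fin (n + n') → ZMod D) ℂ :=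
  Matrix.of fun f g =>
    σ (f ∘ Fin.castAdd n') (g ∘ Fin.castAdd n') * τ (f ∘ Fin.natAdd n) (g ∘ Fin.natAdd n)


set_option linter.unusedSectionVars false
set_option maxHeartbeats 1000000

namespace PA
section A
variable (D : ℕ) [NeZero D]

noncomputable def χ (a : ZMod D) : ℂ := rootOfUnity D ^ a.val

lemma hprim : IsPrimitiveRoot (rootOfUnity D) D := Complex.isPrimitiveRoot_exp D (NeZero.ne D)

lemma pow_mod (m : ℕ) : rootOfUnity D ^ (m % D) = rootOfUnity D ^ m := by
  conv_rhs => rw [← Nat.mod_add_div m D]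
  rw [pow_add, pow_mul, (hprim D).pow_eq_one, one_pow, mul_one]

lemma χ_natCast (m : ℕ) : χ D (m : ZMod D) = rootOfUnity D ^ m := by
  rw [χ, ZMod.val_natCast, pow_mod]

lemma χ_zero : χ D 0 = 1 := by simp [χ]

lemma χ_add (a b : ZMod D) : χ D (a + b) = χ D a * χ D b := by
  have h : ((a.val + b.val : ℕ) : ZMod D) = a + b := by
    push_cast [ZMod.natCast_val, ZMod.cast_id]; ring
  rw [← h, χ_natCast, pow_add, χ, χ]

lemma χ_inj : Function.Injective (χ D) := by
  intro a b h
  exact ZMod.val_injective D ((hprim D).pow_inj (ZMod.val_lt a) (ZMod.val_lt b) h)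

lemma χ_sum {α : Type*} (s : Finset α) (f : α → ZMod D) :
    χ D (∑ i ∈ s, f i) = ∏ i ∈ s, χ D (f i) := by
  classical
  induction s using Finset.cons_induction with
  | empty => simp [χ_zero]
  | cons a s ha ih => rw [Finset.sum_cons, Finset.prod_cons, χ_add, ih]

lemma sum_ite_pick {β : Type*} [AddCommMonoid β] [DecidableEq (ZMod D)] (c : ZMod D) (F : ZMod D → β) :
    (∑ l : ZMod D, if l = c then F l else 0) = F c := by simp

noncomputable def P (k p q : ZMod D) : Matrix (ZMod D) (ZMod D) ℂ :=
  Matrix.of fun i j => if i = j + q then χ D (k + p * i) else 0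

lemma Z_diag : ZMat D = Matrix.diagonal (fun j => rootOfUnity D ^ j.val) := by
  ext i j
  by_cases h : i = j <;> simp [ZMat, Matrix.diagonal_apply, h]

lemma X_pow (q : ℕ) : XMat D ^ q = Matrix.of fun i j => if i = j + (q : ZMod D) then 1 else 0 := by
  induction q with
  | zero => ext i j; simp [Matrix.one_apply]
  | succ q ih =>
    rw [pow_succ, ih]
    ext i j
    rw [Matrix.mul_apply]
    simp only [Matrix.of_apply]
    have h1 : ∀ l : ZMod D, (if i = l + (q : ZMod D) then (1:ℂ) else 0) * (XMat D l j)
        = if l = j + 1 then (if i = l + (q : ZMod D) then (1:ℂ) else 0) else 0 := by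
      intro l; simp only [XMat, Matrix.of_apply]; split <;> simp
    rw [Finset.sum_congr rfl fun l _ => h1 l, Finset.sum_ite_eq' Finset.univ]
    simp only [Finset.mem_univ, if_true, Matrix.of_apply]
    have : (i = j + 1 + (q : ZMod D)) ↔ (i = j + ((q : ℕ) + 1 : ℕ)) := by
      push_cast; constructor <;> intro h <;> rw [h] <;> ring
    rw [if_congr this rfl rfl]

lemma ZX_pow (p q : ℕ) : ZMat D ^ p * XMat D ^ q =
    Matrix.of fun i j => if i = j + (q : ZMod D) then rootOfUnity D ^ (i.val * p) else 0 := by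
  rw [Z_diag, Matrix.diagonal_pow, X_pow]
  ext i j
  rw [Matrix.diagonal_mul]
  simp only [Pi.pow_apply, Matrix.of_apply, mul_ite, mul_one, mul_zero, ← pow_mul]

lemma pauli1_eq (k p q : ZMod D) :
    rootOfUnity D ^ k.val • (ZMat D ^ p.val * XMat D ^ q.val) = P D k p q := by
  rw [ZX_pow]
  ext i j
  simp only [Matrix.smul_apply, Matrix.of_apply, smul_ite, smul_zero, P, smul_eq_mul]
  have hq : ((q.val : ℕ) : ZMod D) = q := by simp [ZMod.natCast_val, ZMod.cast_id]
  rw [hq]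
  split
  · rw [χ_add, χ]
    congr 1
    have : p * i = ((p.val * i.val : ℕ) : ZMod D) := by
      push_cast [ZMod.natCast_val, ZMod.cast_id]; ring
    rw [this, χ_natCast, mul_comm p.val i.val]
  · exact mul_zero _

lemma P_one : P D 0 0 0 = 1 := by
  ext i j
  by_cases h : i = j <;> simp [P, Matrix.one_apply, h, χ]

lemma P_mul (k p q k' p' q' : ZMod D) :
    P D k p q * P D k' p' q' = P D (k + k' - p' * q) (p + p') (q + q') := by
  ext i j
  rw [Matrix.mul_apply]
  have h1 : ∀ l : ZMod D,
      (P D k p q) i l * (P D k' p' q') l j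
        = if l = j + q' then (if i = l + q then χ D (k + p * i) * χ D (k' + p' * l) else 0) else 0 := by
    intro l; simp only [P, Matrix.of_apply]; split <;> split <;> simp_all
  rw [Finset.sum_congr rfl fun l _ => h1 l, Finset.sum_ite_eq' Finset.univ]
  simp only [Finset.mem_univ, if_true, P, Matrix.of_apply]
  by_cases hij : i = j + (q + q')
  · have h2 : i = (j + q') + q := by rw [hij]; ring
    rw [if_pos h2, if_pos hij, ← χ_add]
    congr 1
    have h3 : j + q' = i - q := by rw [h2]; ring
    rw [h3]; ring
  · have h2 : ¬ i = (j + q') + q := fun h => hij (by rw [h]; ring)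
    rw [if_neg h2, if_neg hij]
end A

section B
variable {D n : ℕ} [NeZero D]

lemma tensorFun_mul (A B : Fin n → Matrix (ZMod D) (ZMod D) ℂ) :
    tensorFun A * tensorFun B = tensorFun (fun k => A k * B k) := by
  ext f g
  rw [Matrix.mul_apply]
  simp only [tensorFun, Matrix.of_apply, Matrix.mul_apply]
  rw [Finset.prod_univ_sum]
  rw [Fintype.piFinset_univ]
  exact Finset.sum_congr rfl fun h _ => (Finset.prod_mul_distrib).symm

lemma tensorFun_one : tensorFun (fun _ : Fin n => (1 : Matrix (ZMod D) (ZMod D) ℂ)) = 1 := by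
  ext f g
  by_cases h : f = g
  · subst h; simp [tensorFun, Matrix.one_apply]
  · obtain ⟨k, hk⟩ := Function.ne_iff.mp h
    simp only [tensorFun, Matrix.of_apply, Matrix.one_apply, if_neg h]
    exact Finset.prod_eq_zero (Finset.mem_univ k) (by simp [Matrix.one_apply, hk])

lemma tensorFun_pow (A : Fin n → Matrix (ZMod D) (ZMod D) ℂ) (m : ℕ) :
    tensorFun A ^ m = tensorFun (fun k => A k ^ m) := by
  induction m with
  | zero => simpa using tensorFun_one.symm
  | succ m ih => simp only [pow_succ, ih, tensorFun_mul]

lemma tensorPair_tensorFun {n' : ℕ} (A : Fin n → Matrix (ZMod D) (ZMod D) ℂ)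
    (B : Fin n' → Matrix (ZMod D) (ZMod D) ℂ) :
    tensorPair (tensorFun A) (tensorFun B) = tensorFun (Fin.append A B) := by
  ext f g
  simp only [tensorPair, tensorFun, Matrix.of_apply, Function.comp]
  rw [Fin.prod_univ_add]
  congr 1
  · exact Finset.prod_congr rfl fun i _ => by rw [Fin.append_left]
  · exact Finset.prod_congr rfl fun i _ => by rw [Fin.append_right]

lemma trace_parity_mul (M : Matrix (ZMod D) (ZMod D) ℂ) :
    (parityMat D * M).trace = ∑ j, M (-j) j := by
  simp only [Matrix.trace, Matrix.diag, Matrix.mul_apply, parityMat, Matrix.of_apply]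
  refine Finset.sum_congr rfl fun j _ => ?_
  have h1 : ∀ i, (if j = -i then (1:ℂ) else 0) * M i j = if i = -j then M i j else 0 := by
    intro i
    rw [if_congr (show (j = -i) ↔ (i = -j) by rw [eq_comm, neg_eq_iff_eq_neg]) rfl rfl]
    split <;> simp
  rw [Finset.sum_congr rfl fun i _ => h1 i, Finset.sum_ite_eq' Finset.univ]
  simp

lemma parityN_apply (f g : Fin n → ZMod D) :
    parityN D n f g = if f = -g then 1 else 0 := by
  simp only [parityN, tensorFun, parityMat, Matrix.of_apply]
  by_cases h : f = -g
  · subst h; simp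
  · obtain ⟨k, hk⟩ := Function.ne_iff.mp h
    rw [if_neg h]
    exact Finset.prod_eq_zero (Finset.mem_univ k) (by simp only [Pi.neg_apply] at hk; simp [hk])

lemma trace_parityN_mul (M : Matrix (Fin n → ZMod D) (Fin n → ZMod D) ℂ) :
    (parityN D n * M).trace = ∑ f, M (-f) f := by
  simp only [Matrix.trace, Matrix.diag, Matrix.mul_apply, parityN_apply]
  refine Finset.sum_congr rfl fun f _ => ?_
  have h1 : ∀ g, (if f = -g then (1:ℂ) else 0) * M g f = if g = -f then M g f else 0 := by
    intro g
    rw [if_congr (show (f = -g) ↔ (g = -f) by rw [eq_comm, neg_eq_iff_eq_neg]) rfl rfl]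
    split <;> simp
  rw [Finset.sum_congr rfl fun g _ => h1 g, Finset.sum_ite_eq' Finset.univ]
  simp

lemma traceN (σs : Fin n → Matrix (ZMod D) (ZMod D) ℂ) :
    (parityN D n * tensorFun σs).trace = ∏ k, (parityMat D * σs k).trace := by
  rw [trace_parityN_mul]
  have : ∀ k, (parityMat D * σs k).trace = ∑ j, σs k (-j) j := fun k => trace_parity_mul _
  simp only [this]
  rw [Finset.prod_univ_sum, Fintype.piFinset_univ]
  exact Finset.sum_congr rfl fun f _ => by simp [tensorFun]

end B

section C
variable {D : ℕ} [NeZero D]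

lemma isUnit_two (hD : Odd D) : IsUnit (2 : ZMod D) := by
  have := (ZMod.isUnit_iff_coprime 2 D).mpr
    ((Nat.prime_two.coprime_iff_not_dvd).mpr
      (by rwa [← even_iff_two_dvd, ← Nat.not_odd_iff_even, not_not]))
  simpa using this

lemma two_mul_inv_two (hD : Odd D) : (2 : ZMod D) * (2 : ZMod D)⁻¹ = 1 :=
  ZMod.mul_inv_of_unit _ (isUnit_two hD)

lemma trace_P (hD : Odd D) (k p q : ZMod D) :
    (parityMat D * P D k p q).trace = χ D (k + p * q * (2 : ZMod D)⁻¹) := by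
  set inv2 : ZMod D := (2 : ZMod D)⁻¹ with hinv2
  have h2 : (2 : ZMod D) * inv2 = 1 := two_mul_inv_two hD
  rw [trace_parity_mul]
  have key : ∀ j : ZMod D, (-j = j + q) ↔ (j = -(q * inv2)) := by
    intro j
    constructor
    · intro h
      have h1 : (2 : ZMod D) * j = -q := by linear_combination -h
      calc j = (2 * inv2) * j := by rw [h2, one_mul]
        _ = inv2 * (2 * j) := by ring
        _ = inv2 * (-q) := by rw [h1]
        _ = -(q * inv2) := by ring
    · intro h
      rw [h]
      linear_combination q * h2
  have h1 : ∀ j : ZMod D, P D k p q (-j) j = if j = -(q * inv2) then χ D (k + p * (-j)) else 0 := by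
    intro j
    simp only [P, Matrix.of_apply]
    rw [if_congr (key j) rfl rfl]
  rw [Finset.sum_congr rfl fun j _ => h1 j, Finset.sum_ite_eq' Finset.univ]
  simp only [Finset.mem_univ, if_true, neg_neg]
  ring_nf

lemma gauss_nat (m : ℕ) : 2 * (∑ i ∈ Finset.range m, i) + m = m * m := by
  induction m with
  | zero => simp
  | succ m ih =>
    rw [Finset.sum_range_succ]
    ring_nf
    ring_nf at ih
    nlinarith [ih]

lemma P_pow (hD : Odd D) (k p q : ZMod D) (m : ℕ) :
    P D k p q ^ m = P D ((m : ZMod D) * k - p * q * ((∑ i ∈ Finset.range m, i : ℕ) : ZMod D))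
      ((m : ZMod D) * p) ((m : ZMod D) * q) := by
  induction m with
  | zero => simpa using (P_one D).symm
  | succ m ih =>
    rw [pow_succ, ih, P_mul]
    have hs : ((∑ i ∈ Finset.range (m+1), i : ℕ) : ZMod D)
        = ((∑ i ∈ Finset.range m, i : ℕ) : ZMod D) + m := by
      rw [Finset.sum_range_succ]; push_cast; ring
    congr 1 <;> push_cast [hs] <;> ring

lemma val_pow_eq (hD : Odd D) (k p q : ZMod D) (m : ℕ) :
    (m : ZMod D) * k - p * q * ((∑ i ∈ Finset.range m, i : ℕ) : ZMod D)
      + ((m : ZMod D) * p) * ((m : ZMod D) * q) * (2 : ZMod D)⁻¹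
    = (m : ZMod D) * (k + p * q * (2 : ZMod D)⁻¹) := by
  set inv2 : ZMod D := (2 : ZMod D)⁻¹ with hinv2
  have h2 : (2 : ZMod D) * inv2 = 1 := two_mul_inv_two hD
  set T : ZMod D := ((∑ i ∈ Finset.range m, i : ℕ) : ZMod D) with hT
  have hg : (2 : ZMod D) * T + m = (m : ZMod D) * m := by
    have := gauss_nat m
    calc (2 : ZMod D) * T + m = ((2 * (∑ i ∈ Finset.range m, i) + m : ℕ) : ZMod D) := by push_cast [hT]; ring
      _ = ((m * m : ℕ) : ZMod D) := by rw [this]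
      _ = (m : ZMod D) * m := by push_cast; ring
  linear_combination (-(p*q*inv2)) * hg + (p*q*T) * h2

lemma trace_PN (hD : Odd D) {n : ℕ} (ks ps qs : Fin n → ZMod D) :
    (parityN D n * tensorFun fun i => P D (ks i) (ps i) (qs i)).trace
      = χ D (∑ i, (ks i + ps i * qs i * (2 : ZMod D)⁻¹)) := by
  rw [traceN, χ_sum]
  exact Finset.prod_congr rfl fun i _ => trace_P hD (ks i) (ps i) (qs i)

lemma isPauliN_decomp {n : ℕ} {σ : Matrix (Fin n → ZMod D) (Fin n → ZMod D) ℂ}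
    (h : IsPauliN D n σ) :
    ∃ ks ps qs : Fin n → ZMod D, σ = tensorFun fun i => P D (ks i) (ps i) (qs i) := by
  obtain ⟨σs, hσs, rfl⟩ := h
  choose k p q hk using hσs
  refine ⟨k, p, q, ?_⟩
  exact congrArg tensorFun (funext fun i => (hk i).trans (pauli1_eq D (k i) (p i) (q i)))

noncomputable def vAux (D : ℕ) [NeZero D] (n : ℕ)
    (σ : Matrix (Fin n → ZMod D) (Fin n → ZMod D) ℂ) : ZMod D :=
  if h : ∃ k : ZMod D, (parityN D n * σ).trace = χ D k then h.choose else 0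

lemma vAux_eq {n : ℕ} {σ : Matrix (Fin n → ZMod D) (Fin n → ZMod D) ℂ} {c : ZMod D}
    (h : (parityN D n * σ).trace = χ D c) : vAux D n σ = c := by
  have hex : ∃ k : ZMod D, (parityN D n * σ).trace = χ D k := ⟨c, h⟩
  rw [vAux, dif_pos hex]
  exact χ_inj D (hex.choose_spec.symm.trans h)

end C
end PA

open PA

/-- for `D` odd, `tr(Π_D^{⊗n} σ)` is a `D`-th root of unity for every
`n`-quDit generalized Pauli `σ`, so there is a well-defined map `v` with
`ω^{v(σ)} = tr(Π_D^{⊗n} σ)`; it satisfies `v(ω^j I) = j`, `v(σ ⊗ τ) = v(σ) + v(τ)`,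
`v(σ^j) = j·v(σ)`, and `v(στ) = v(σ) + v(τ)` for commuting Paulis `σ, τ`. -/
theorem pauli_value_map (D : ℕ) [NeZero D] (hD : Odd D) :
    (∀ (n : ℕ) (σ : Matrix (Fin n → ZMod D) (Fin n → ZMod D) ℂ), IsPauliN D n σ →
      ∃ k : ZMod D, (parityN D n * σ).trace = rootOfUnity D ^ k.val) ∧
    Function.Injective (fun k : ZMod D => rootOfUnity D ^ k.val) ∧
    ∃ v : (n : ℕ) → Matrix (Fin n → ZMod D) (Fin n → ZMod D) ℂ → ZMod D,
      (∀ (n : ℕ) (σ : Matrix (Fin n → ZMod D) (Fin n → ZMod D) ℂ), IsPauliN D n σ →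
        rootOfUnity D ^ (v n σ).val = (parityN D n * σ).trace) ∧
      (∀ (n : ℕ) (j : ZMod D), v n (rootOfUnity D ^ j.val • 1) = j) ∧
      (∀ (n n' : ℕ) (σ : Matrix (Fin n → ZMod D) (Fin n → ZMod D) ℂ)
          (τ : Matrix (Fin n' → ZMod D) (Fin n' → ZMod D) ℂ),
        IsPauliN D n σ → IsPauliN D n' τ →
        v (n + n') (tensorPair σ τ) = v n σ + v n' τ) ∧
      (∀ (n : ℕ) (σ : Matrix (Fin n → ZMod D) (Fin n → ZMod D) ℂ) (j : ZMod D),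
        IsPauliN D n σ → v n (σ ^ j.val) = j * v n σ) ∧
      (∀ (n : ℕ) (σ τ : Matrix (Fin n → ZMod D) (Fin n → ZMod D) ℂ),
        IsPauliN D n σ → IsPauliN D n τ → Commute σ τ →
        v n (σ * τ) = v n σ + v n τ) := by
  set inv2 : ZMod D := (2 : ZMod D)⁻¹ with hinv2
  have h2 : (2 : ZMod D) * inv2 = 1 := two_mul_inv_two hD
  refine ⟨?_, χ_inj D, vAux D, ?_, ?_, ?_, ?_, ?_⟩
  · intro n σ hσ
    obtain ⟨ks, ps, qs, rfl⟩ := isPauliN_decomp hσ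
    exact ⟨_, trace_PN hD ks ps qs⟩
  · intro n σ hσ
    obtain ⟨ks, ps, qs, rfl⟩ := isPauliN_decomp hσ
    rw [vAux_eq (trace_PN hD ks ps qs), trace_PN hD ks ps qs]
    rfl
  · intro n j
    have hone : tensorFun (fun _ : Fin n => P D 0 0 0) = 1 := by
      rw [show (fun _ : Fin n => P D 0 0 0) = fun _ : Fin n => (1 : Matrix (ZMod D) (ZMod D) ℂ)
        from funext fun _ => P_one D]
      exact tensorFun_one
    have htr1 : (parityN D n * (1 : Matrix (Fin n → ZMod D) (Fin n → ZMod D) ℂ)).trace = 1 := by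
      rw [← hone, trace_PN hD (fun _ => 0) (fun _ => 0) (fun _ => 0)]
      simp [χ_zero]
    apply vAux_eq
    rw [Matrix.mul_smul, Matrix.trace_smul, smul_eq_mul, htr1, mul_one]
    rfl
  · intro n n' σ τ hσ hτ
    obtain ⟨ks, ps, qs, rfl⟩ := isPauliN_decomp hσ
    obtain ⟨ks', ps', qs', rfl⟩ := isPauliN_decomp hτ
    rw [vAux_eq (trace_PN hD ks ps qs), vAux_eq (trace_PN hD ks' ps' qs')]
    apply vAux_eq
    rw [tensorPair_tensorFun, traceN, Fin.prod_univ_add]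
    have hl : ∀ i : Fin n, (parityMat D *
        Fin.append (fun i => P D (ks i) (ps i) (qs i)) (fun i => P D (ks' i) (ps' i) (qs' i))
          (Fin.castAdd n' i)).trace = χ D (ks i + ps i * qs i * inv2) := by
      intro i; rw [Fin.append_left]; exact trace_P hD _ _ _
    have hr : ∀ i : Fin n', (parityMat D *
        Fin.append (fun i => P D (ks i) (ps i) (qs i)) (fun i => P D (ks' i) (ps' i) (qs' i))
          (Fin.natAdd n i)).trace = χ D (ks' i + ps' i * qs' i * inv2) := by
      intro i; rw [Fin.append_right]; exact trace_P hD _ _ _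
    rw [Finset.prod_congr rfl fun i _ => hl i, Finset.prod_congr rfl fun i _ => hr i,
      ← χ_sum, ← χ_sum, ← χ_add]
  · intro n σ j hσ
    obtain ⟨ks, ps, qs, rfl⟩ := isPauliN_decomp hσ
    rw [vAux_eq (trace_PN hD ks ps qs)]
    have hpow : (tensorFun fun i => P D (ks i) (ps i) (qs i)) ^ j.val
        = tensorFun fun i => P D
            ((j.val : ZMod D) * ks i - ps i * qs i * ((∑ l ∈ Finset.range j.val, l : ℕ) : ZMod D))
            ((j.val : ZMod D) * ps i) ((j.val : ZMod D) * qs i) := by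
      rw [tensorFun_pow]
      exact congrArg tensorFun (funext fun i => P_pow hD (ks i) (ps i) (qs i) j.val)
    rw [hpow]
    apply vAux_eq
    rw [trace_PN hD]
    congr 1
    have hj : ((j.val : ℕ) : ZMod D) = j := by simp [ZMod.natCast_val, ZMod.cast_id]
    calc ∑ i, ((j.val : ZMod D) * ks i - ps i * qs i * ((∑ l ∈ Finset.range j.val, l : ℕ) : ZMod D)
          + ((j.val : ZMod D) * ps i) * ((j.val : ZMod D) * qs i) * inv2)
        = ∑ i, (j.val : ZMod D) * (ks i + ps i * qs i * inv2) :=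
          Finset.sum_congr rfl fun i _ => val_pow_eq hD (ks i) (ps i) (qs i) j.val
      _ = j * ∑ i, (ks i + ps i * qs i * inv2) := by rw [← Finset.mul_sum, hj]
  · intro n σ τ hσ hτ hc
    obtain ⟨ks, ps, qs, rfl⟩ := isPauliN_decomp hσ
    obtain ⟨ks', ps', qs', rfl⟩ := isPauliN_decomp hτ
    rw [vAux_eq (trace_PN hD ks ps qs), vAux_eq (trace_PN hD ks' ps' qs')]
    have hmul1 : (tensorFun fun i => P D (ks i) (ps i) (qs i)) *
        (tensorFun fun i => P D (ks' i) (ps' i) (qs' i))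
        = tensorFun fun i => P D (ks i + ks' i - ps' i * qs i) (ps i + ps' i) (qs i + qs' i) := by
      rw [tensorFun_mul]
      exact congrArg tensorFun (funext fun i => P_mul D _ _ _ _ _ _)
    have hmul2 : (tensorFun fun i => P D (ks' i) (ps' i) (qs' i)) *
        (tensorFun fun i => P D (ks i) (ps i) (qs i))
        = tensorFun fun i => P D (ks' i + ks i - ps i * qs' i) (ps' i + ps i) (qs' i + qs i) := by
      rw [tensorFun_mul]
      exact congrArg tensorFun (funext fun i => P_mul D _ _ _ _ _ _)
    have hkey : ∑ i, ((ks i + ks' i - ps' i * qs i) + (ps i + ps' i) * (qs i + qs' i) * inv2)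
        = ∑ i, ((ks' i + ks i - ps i * qs' i) + (ps' i + ps i) * (qs' i + qs i) * inv2) := by
      apply χ_inj D
      rw [← trace_PN hD, ← trace_PN hD, ← hmul1, ← hmul2, hc.eq]
    have h0 : ∑ i, (ps i * qs' i - ps' i * qs i) = 0 := by
      calc ∑ i, (ps i * qs' i - ps' i * qs i)
          = ∑ i, (((ks i + ks' i - ps' i * qs i) + (ps i + ps' i) * (qs i + qs' i) * inv2)
            - ((ks' i + ks i - ps i * qs' i) + (ps' i + ps i) * (qs' i + qs i) * inv2)) :=
            Finset.sum_congr rfl fun i _ => by ring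
        _ = 0 := by rw [Finset.sum_sub_distrib, hkey, sub_self]
    rw [hmul1]
    rw [vAux_eq (trace_PN hD _ _ _)]
    have e1 : ∑ i, (((ks i + ks' i - ps' i * qs i) + (ps i + ps' i) * (qs i + qs' i) * inv2)
          - (ks i + ps i * qs i * inv2) - (ks' i + ps' i * qs' i * inv2))
        = (∑ i, (ps i * qs' i - ps' i * qs i)) * inv2 := by
      rw [Finset.sum_mul]
      refine Finset.sum_congr rfl fun i _ => ?_
      linear_combination (ps' i * qs i) * h2
    have e2 : (∑ i, ((ks i + ks' i - ps' i * qs i) + (ps i + ps' i) * (qs i + qs' i) * inv2))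
        - (∑ i, (ks i + ps i * qs i * inv2)) - (∑ i, (ks' i + ps' i * qs' i * inv2)) = 0 := by
      rw [← Finset.sum_sub_distrib, ← Finset.sum_sub_distrib, e1, h0, zero_mul]
    linear_combination e2
end
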